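/- (Kushnirenko's inequality) Let (X,d) be a compact metric space of finite ball dimension D(X) and f : X → X a Lipschitz map with Lipschitz constant L(f). Then h_top(f) ≤ D(X)·max(0, log L(f)). -/

import Mathlib

open Filter Set

noncomputable section

/-- The Bowen metric `d_n^T(x,y) = max_{0 ≤ i < n} d(T^i x, T^i y)`. -/
def bowen {X : Type*} [MetricSpace X] (T : X → X) (n : ℕ) (x y : X) : ℝ :=
  (((Finset.range n).sup fun i => nndist (T^[i] x) (T^[i] y) : NNReal) : ℝ)

/-- Minimal cardinality `b(ε)` of a cover of `X` by `ε`-balls. -/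
def ballCov (X : Type*) [MetricSpace X] (ε : ℝ) : ℕ :=
  sInf {k | ∃ s : Finset X, s.card = k ∧ (Set.univ : Set X) ⊆ ⋃ x ∈ s, Metric.ball x ε}

/-- The ball dimension `D(X) = limsup_{ε→0} log b(ε) / |log ε|`. -/
def ballDim (X : Type*) [MetricSpace X] : ℝ :=
  limsup (fun ε : ℝ => Real.log (ballCov X ε) / |Real.log ε|) (nhdsWithin 0 (Set.Ioi 0))

/-- Minimal number of `ε`-balls in the Bowen metric `d_n^T` needed to cover `X`. -/
def bowenCov {X : Type*} [MetricSpace X] (T : X → X) (n : ℕ) (ε : ℝ) : ℕ :=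
  sInf {k | ∃ s : Finset X, s.card = k ∧
    (Set.univ : Set X) ⊆ ⋃ x ∈ s, {y | bowen T n x y < ε}}

/-- Topological entropy `h_top(T) = lim_{ε→0} limsup_n (1/n) log S_{d_n^T}(ε)`. -/
def htop {X : Type*} [MetricSpace X] (T : X → X) : ℝ :=
  ⨆ ε : {e : ℝ // 0 < e},
    limsup (fun n : ℕ => Real.log (bowenCov T n (ε : ℝ)) / n) atTop

/-! Since `d_n^f ≤ max(1, L)^n · d`, every cover by `d`-balls of radius `ε / max(1, L)^n` is a
cover by `d_n^f`-balls of radius `ε`, so `S_{d_n^f}(ε) ≤ b(ε / max(1, L)^n)`. For `L ≤ 1` this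
bound does not depend on `n` and the entropy vanishes. For `L > 1` the radii `ε / L^n` tend
to `0`, where `log b(δ) ≤ (D(X) + η) |log δ|`; this gives
`log S_{d_n^f}(ε) ≤ (D(X) + η) (n log L - log ε)`, and dividing by `n` and letting first
`n → ∞`, then `η → 0` yields `D(X) log L` for every `ε`. -/

open Topology Real

lemma log_natCast_le_log_natCast {a b : ℕ} (h : a ≤ b) : log a ≤ log b := by
  rcases Nat.eq_zero_or_pos a with rfl | ha
  · simpa using log_natCast_nonneg b
  · exact log_le_log (by exact_mod_cast ha) (by exact_mod_cast h)

lemma limsup_le_of_eventually_le_of_tendsto {u v : ℕ → ℝ} {c : ℝ} (hu : ∀ n, 0 ≤ u n)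
    (huv : u ≤ᶠ[atTop] v) (hv : Tendsto v atTop (𝓝 c)) : limsup u atTop ≤ c :=
  (limsup_le_limsup huv (isCoboundedUnder_le_of_le atTop hu) hv.isBoundedUnder_le).trans_eq
    hv.limsup_eq

section

variable {X : Type*} [MetricSpace X]

lemma exists_finset_card_eq_ballCov [CompactSpace X] {ε : ℝ} (hε : 0 < ε) :
    ∃ s : Finset X, s.card = ballCov X ε ∧ univ ⊆ ⋃ x ∈ s, Metric.ball x ε := by
  obtain ⟨t, -, ht, hcov⟩ := finite_cover_balls_of_compact (isCompact_univ (X := X)) hε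
  exact Nat.sInf_mem (s := {k | ∃ s : Finset X, s.card = k ∧ univ ⊆ ⋃ x ∈ s, Metric.ball x ε})
    ⟨_, ht.toFinset, rfl, by simpa using hcov⟩

lemma bowen_le_pow_mul_dist {f : X → X} {L : NNReal} (hf : LipschitzWith L f) (n : ℕ)
    (x y : X) : bowen f n x y ≤ max 1 (L : ℝ) ^ n * dist x y := by
  have hsup : (Finset.range n).sup (fun i => nndist (f^[i] x) (f^[i] y))
      ≤ max 1 L ^ n * nndist x y := by
    refine Finset.sup_le fun i hi => ?_
    calc nndist (f^[i] x) (f^[i] y) ≤ L ^ i * nndist x y := by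
          simpa using (hf.iterate i).nndist_le x y
      _ ≤ max 1 L ^ n * nndist x y := by
          refine mul_le_mul_of_nonneg_right ?_ zero_le
          calc L ^ i ≤ max 1 L ^ i := by gcongr; exact le_max_right _ _
            _ ≤ max 1 L ^ n :=
              pow_le_pow_right₀ (le_max_left _ _) (Finset.mem_range.1 hi).le
  simpa [bowen] using NNReal.coe_le_coe.2 hsup

lemma bowenCov_le_ballCov [CompactSpace X] {f : X → X} {L : NNReal} (hf : LipschitzWith L f)
    (n : ℕ) {ε : ℝ} (hε : 0 < ε) : bowenCov f n ε ≤ ballCov X (ε / max 1 (L : ℝ) ^ n) := by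
  have hMn : 0 < max 1 (L : ℝ) ^ n := by positivity
  obtain ⟨s, hcard, hcov⟩ := exists_finset_card_eq_ballCov (X := X) (div_pos hε hMn)
  refine Nat.sInf_le ⟨s, hcard, fun y hy => ?_⟩
  obtain ⟨x, hx, hxy⟩ := mem_iUnion₂.1 (hcov hy)
  refine mem_iUnion₂.2 ⟨x, hx, ?_⟩
  calc bowen f n x y ≤ max 1 (L : ℝ) ^ n * dist x y := bowen_le_pow_mul_dist hf n x y
    _ < max 1 (L : ℝ) ^ n * (ε / max 1 (L : ℝ) ^ n) := by
        rw [dist_comm]; exact mul_lt_mul_of_pos_left hxy hMn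
    _ = ε := mul_div_cancel₀ ε hMn.ne'

lemma eventually_log_ballCov_le
    (hfin : IsBoundedUnder (· ≤ ·) (𝓝[>] 0) (fun ε : ℝ => log (ballCov X ε) / |log ε|))
    {η : ℝ} (hη : 0 < η) : ∀ᶠ δ in 𝓝[>] 0, log (ballCov X δ) ≤ (ballDim X + η) * -log δ := by
  have hlt : ∀ᶠ δ in 𝓝[>] (0 : ℝ), log (ballCov X δ) / |log δ| < ballDim X + η :=
    eventually_lt_of_limsup_lt (lt_add_of_pos_right _ hη) hfin
  have hsmall : ∀ᶠ δ in 𝓝[>] (0 : ℝ), δ ∈ Ioo 0 1 := Ioo_mem_nhdsGT one_pos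
  filter_upwards [hlt, hsmall] with δ hδ ⟨hδ0, hδ1⟩
  have hlog : log δ < 0 := log_neg hδ0 hδ1
  rw [abs_of_neg hlog, div_lt_iff₀ (neg_pos.2 hlog)] at hδ
  exact hδ.le

variable [CompactSpace X] {f : X → X} {L : NNReal}

lemma limsup_log_bowenCov_div_le_of_le_one (hf : LipschitzWith L f) (hL : (L : ℝ) ≤ 1)
    {ε : ℝ} (hε : 0 < ε) : limsup (fun n : ℕ => log (bowenCov f n ε) / n) atTop ≤ 0 := by
  refine limsup_le_of_eventually_le_of_tendsto
    (fun n => div_nonneg (log_natCast_nonneg _) n.cast_nonneg)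
    (Eventually.of_forall fun n => ?_) (tendsto_const_div_atTop_nhds_zero_nat (log (ballCov X ε)))
  have hcov := bowenCov_le_ballCov hf n hε
  rw [max_eq_left hL, one_pow, div_one] at hcov
  exact div_le_div_of_nonneg_right (log_natCast_le_log_natCast hcov) n.cast_nonneg

lemma limsup_log_bowenCov_div_le_add (hf : LipschitzWith L f) (hL : 1 < (L : ℝ))
    (hfin : IsBoundedUnder (· ≤ ·) (𝓝[>] 0) (fun ε : ℝ => log (ballCov X ε) / |log ε|))
    {ε : ℝ} (hε : 0 < ε) {η : ℝ} (hη : 0 < η) :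
    limsup (fun n : ℕ => log (bowenCov f n ε) / n) atTop ≤ (ballDim X + η) * log L := by
  have hLn (n : ℕ) : 0 < (L : ℝ) ^ n := pow_pos (one_pos.trans hL) n
  have hradius : Tendsto (fun n : ℕ => ε / (L : ℝ) ^ n) atTop (𝓝[>] 0) :=
    tendsto_nhdsWithin_of_tendsto_nhds_of_eventually_within _
      (tendsto_const_nhds.div_atTop (tendsto_pow_atTop_atTop_of_one_lt hL))
      (Eventually.of_forall fun n => div_pos hε (hLn n))
  have hbound : Tendsto (fun n : ℕ => (ballDim X + η) * (log L - log ε / n)) atTop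
      (𝓝 ((ballDim X + η) * log L)) := by
    simpa using ((tendsto_const_div_atTop_nhds_zero_nat (log ε)).const_sub (log (L : ℝ))).const_mul
      (ballDim X + η)
  refine limsup_le_of_eventually_le_of_tendsto
    (fun n => div_nonneg (log_natCast_nonneg _) n.cast_nonneg) ?_ hbound
  filter_upwards [hradius.eventually (eventually_log_ballCov_le hfin hη), eventually_gt_atTop 0]
    with n hn hn0
  have hcov := bowenCov_le_ballCov hf n hε
  rw [max_eq_right hL.le] at hcov
  have hlog : -log (ε / (L : ℝ) ^ n) = n * (log L - log ε / n) := by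
    rw [log_div hε.ne' (hLn n).ne', log_pow]
    field_simp
    ring
  rw [div_le_iff₀ (by exact_mod_cast hn0)]
  calc log (bowenCov f n ε) ≤ log (ballCov X (ε / (L : ℝ) ^ n)) := log_natCast_le_log_natCast hcov
    _ ≤ (ballDim X + η) * -log (ε / (L : ℝ) ^ n) := hn
    _ = (ballDim X + η) * (log L - log ε / n) * n := by rw [hlog]; ring

lemma limsup_log_bowenCov_div_le (hf : LipschitzWith L f)
    (hfin : IsBoundedUnder (· ≤ ·) (𝓝[>] 0) (fun ε : ℝ => log (ballCov X ε) / |log ε|))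
    {ε : ℝ} (hε : 0 < ε) :
    limsup (fun n : ℕ => log (bowenCov f n ε) / n) atTop ≤ ballDim X * max 0 (log L) := by
  rcases le_or_gt (L : ℝ) 1 with hL | hL
  · rw [max_eq_left (log_nonpos L.coe_nonneg hL), mul_zero]
    exact limsup_log_bowenCov_div_le_of_le_one hf hL hε
  · rw [max_eq_right (log_pos hL).le]
    have hη : Tendsto (fun η => (ballDim X + η) * log L) (𝓝[>] 0) (𝓝 (ballDim X * log L)) := by
      simpa using ((tendsto_const_nhds.add tendsto_id).mul_const (log (L : ℝ))).mono_left
        (nhdsWithin_le_nhds (a := (0 : ℝ)) (s := Ioi 0))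
    exact ge_of_tendsto hη (eventually_nhdsWithin_of_forall fun η hη =>
      limsup_log_bowenCov_div_le_add hf hL hfin hε hη)

end

/-- Kushnirenko's inequality: for a Lipschitz map `f` of a compact metric space of
finite ball dimension, `h_top(f) ≤ D(X) · max(0, log L(f))`. -/
theorem kushnirenko_inequality {X : Type*} [MetricSpace X] [CompactSpace X]
    (f : X → X) (L : NNReal) (hf : LipschitzWith L f)
    (hfin : IsBoundedUnder (· ≤ ·) (nhdsWithin 0 (Set.Ioi 0))
      (fun ε : ℝ => Real.log (ballCov X ε) / |Real.log ε|)) :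
    htop f ≤ ballDim X * max 0 (Real.log (L : ℝ)) := by
  have : Nonempty {e : ℝ // 0 < e} := nonempty_Ioi_subtype
  exact ciSup_le fun ε => limsup_log_bowenCov_div_le hf hfin ε.2

end
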